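/- Let F ∈ C⁰(closed unit disk, ℝ²) and suppose |F(x) − φ(x)| < δ for all x ∈ ∂B₁(0), where δ ∈ (0,1) and φ : ℝ² → ℝ² is a homeomorphism with φ(0) = 0 and min_{|x|=1} |φ(x)| ≥ 1. Then F(B₁(0)) ⊇ B_{1−δ}(0). -/

import Mathlib

/-!
Identify the plane with `ℂ`. If some `y` with `‖y‖ < 1 - δ` were missed by `F(B₁)`, then `F - y`
would not vanish on the closed disk, so its restriction to the unit circle has a continuous
logarithm (lift the radial contraction through the covering map `exp`). Since
`‖F - φ‖ < δ < ‖φ - y‖` on the circle, the straight-line homotopy gives a logarithm `L` of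
`φ - y` as well. Pulling the contraction `exp (s • L) + y` back through `φ⁻¹` then contracts
`z ↦ z - φ⁻¹ y` in `ℂ \ {0}`. But `φ⁻¹ y` lies in the open unit disk, so this loop is homotopic
to the identity of the circle, which has no continuous logarithm.
-/

open Metric Set unitInterval

theorem add_smul_ne_zero_of_norm_lt {E : Type*} [SeminormedAddCommGroup E] [NormedSpace ℝ E]
    {v w : E} {t : ℝ} (ht0 : 0 ≤ t) (ht1 : t ≤ 1) (h : ‖w‖ < ‖v‖) : v + t • w ≠ 0 := by
  have hw : ‖t • w‖ ≤ ‖w‖ := by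
    rw [norm_smul, Real.norm_of_nonneg ht0]
    exact mul_le_of_le_one_left (norm_nonneg w) ht1
  intro h0
  rw [add_eq_zero_iff_eq_neg.1 h0, norm_neg] at h
  linarith

def HasContinuousLog {A : Type*} [TopologicalSpace A] (g : A → ℂ) : Prop :=
  ∃ L : A → ℂ, Continuous L ∧ ∀ a, Complex.exp (L a) = g a

namespace HasContinuousLog

variable {A : Type*} [TopologicalSpace A]

theorem const {c : ℂ} (hc : c ≠ 0) : HasContinuousLog fun _ : A => c :=
  ⟨fun _ => Complex.log c, continuous_const, fun _ => Complex.exp_log hc⟩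

theorem of_homotopy {f₀ f₁ : A → ℂ} (H : I × A → ℂ) (hH : Continuous H) (hH0 : ∀ x, H x ≠ 0)
    (h₀ : ∀ a, H (0, a) = f₀ a) (h₁ : ∀ a, H (1, a) = f₁ a) (hf₀ : HasContinuousLog f₀) :
    HasContinuousLog f₁ := by
  obtain ⟨L, hLc, hL⟩ := hf₀
  let H' : C(I × A, {z : ℂ // z ≠ 0}) := ⟨fun x => ⟨H x, hH0 x⟩, by fun_prop⟩
  let Λ := Complex.isCoveringMap_exp.liftHomotopy H' ⟨L, hLc⟩ fun a => Subtype.ext <| by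
    simp [H', h₀, hL]
  refine ⟨fun a => Λ (1, a), by fun_prop, fun a => ?_⟩
  rw [← h₁]
  exact congrArg Subtype.val (congrFun (Complex.isCoveringMap_exp.liftHomotopy_lifts _ _ _) (1, a))

theorem of_norm_sub_lt {g g' : A → ℂ} (hg : Continuous g) (hg' : Continuous g')
    (h : ∀ a, ‖g a - g' a‖ < ‖g' a‖) (hlog : HasContinuousLog g) : HasContinuousLog g' :=
  hlog.of_homotopy (fun x => g' x.2 + (σ x.1 : ℝ) • (g x.2 - g' x.2)) (by fun_prop)
    (fun x => add_smul_ne_zero_of_norm_lt (σ x.1).2.1 (σ x.1).2.2 (h x.2)) (fun a => by simp)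
    (fun a => by simp)

theorem of_homeomorph_comp_sub (ψ : ℂ ≃ₜ ℂ) {g : A → ℂ} {y : ℂ}
    (hlog : HasContinuousLog fun a => ψ (g a) - y) :
    HasContinuousLog fun a => g a - ψ.symm y := by
  obtain ⟨L, hLc, hL⟩ := hlog
  refine (const (A := A) (c := ψ.symm (1 + y) - ψ.symm y) ?_).of_homotopy
    (fun x => ψ.symm (Complex.exp (x.1 * L x.2) + y) - ψ.symm y) (by fun_prop)
    (fun x => ?_) (fun a => by simp) (fun a => by simp [hL])
  · simp [sub_eq_zero]
  · simp [sub_eq_zero, Complex.exp_ne_zero]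

end HasContinuousLog

theorem hasContinuousLog_circle_of_continuousOn_closedBall {u : ℂ → ℂ}
    (hu : ContinuousOn u (closedBall 0 1)) (hu0 : ∀ z ∈ closedBall (0 : ℂ) 1, u z ≠ 0) : HasContinuousLog fun z : Circle => u z := by
  have hmem : ∀ x : I × Circle, (x.1 : ℂ) * x.2 ∈ closedBall (0 : ℂ) 1 := fun x => by
    simpa [abs_of_nonneg x.1.2.1, Circle.norm_coe] using x.1.2.2
  exact (HasContinuousLog.const (hu0 0 (by simp))).of_homotopy (fun x => u (x.1 * x.2))
    (hu.comp_continuous (by fun_prop) hmem) (fun x => hu0 _ (hmem x)) (fun a => by simp)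
    (fun a => by simp)

theorem not_hasContinuousLog_circle_coe : ¬ HasContinuousLog fun z : Circle => (z : ℂ) := by
  rintro ⟨L, hLc, hL⟩
  -- `t ↦ L (exp (t i)) - t i` lifts a constant through `exp`, so it is constant; yet it drops by
  -- `2πi` between `t = 0` and `t = 2π`.
  have hconst := Complex.isCoveringMap_exp.const_of_comp
    (g := fun t : ℝ => L (Circle.exp t) - t * Complex.I) (by fun_prop)
    (fun t t' => Subtype.ext <| by simp [Complex.exp_sub, hL]) (2 * Real.pi) 0
  simp at hconst

theorem not_hasContinuousLog_circle_sub {p : ℂ} (hp : ‖p‖ < 1) :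
    ¬ HasContinuousLog fun z : Circle => (z : ℂ) - p := fun hlog =>
  not_hasContinuousLog_circle_coe <| hlog.of_homotopy (fun x => x.2 + (σ x.1 : ℝ) • -p)
    (by fun_prop)
    (fun x => add_smul_ne_zero_of_norm_lt (σ x.1).2.1 (σ x.1).2.2 (by simpa [Circle.norm_coe]))
    (fun z => by simp [sub_eq_add_neg]) (fun z => by simp)

theorem Homeomorph.ball_subset_image_ball {E : Type*} [NormedAddCommGroup E] [NormedSpace ℝ E]
    (φ : E ≃ₜ E) {c : E} {r : ℝ} (hc : φ c = c) (hr : ∀ x ∈ sphere c r, r ≤ dist (φ x) c) :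
    ball c r ⊆ φ '' ball c r := by
  intro z hz
  have hcover : ball c r ⊆ φ '' ball c r ∪ (φ '' closedBall c r)ᶜ := by
    rintro w hw
    by_cases hw' : w ∈ φ '' closedBall c r
    · obtain ⟨x, hx, rfl⟩ := hw'
      rcases (mem_closedBall.1 hx).lt_or_eq with hlt | heq
      · exact .inl ⟨x, hlt, rfl⟩
      · exact absurd (hr x heq) (not_le.2 hw)
    · exact .inr hw'
  have hc_mem : c ∈ ball c r := mem_ball_self (pos_of_mem_ball hz)
  exact isPreconnected_ball.subset_left_of_subset_union (φ.isOpenMap _ isOpen_ball)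
    (φ.isClosedMap _ isClosed_closedBall).isOpen_compl
    (disjoint_compl_right.mono_left (image_mono ball_subset_closedBall)) hcover
    ⟨c, hc_mem, c, hc_mem, hc⟩ hz

theorem Complex.ball_subset_image_ball_of_norm_sub_lt {f : ℂ → ℂ} (ψ : ℂ ≃ₜ ℂ) {δ : ℝ}
    (hf : ContinuousOn f (closedBall 0 1)) (hψ0 : ψ 0 = 0)
    (hψ1 : ∀ z ∈ sphere (0 : ℂ) 1, 1 ≤ ‖ψ z‖)
    (hclose : ∀ z ∈ sphere (0 : ℂ) 1, ‖f z - ψ z‖ < δ) :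
    ball 0 (1 - δ) ⊆ f '' ball 0 1 := by
  intro y hy
  by_contra hy_not
  rw [mem_ball_zero_iff] at hy
  have hψy : ∀ z ∈ sphere (0 : ℂ) 1, δ < ‖ψ z - y‖ := fun z hz => by
    linarith [hψ1 z hz, norm_sub_norm_le (ψ z) y]
  have hfy : ∀ z ∈ closedBall (0 : ℂ) 1, f z - y ≠ 0 := by
    intro z hz hzy
    rcases (mem_closedBall_zero_iff.1 hz).lt_or_eq with hlt | heq
    · exact hy_not ⟨z, mem_ball_zero_iff.2 hlt, sub_eq_zero.1 hzy⟩
    · have hz : z ∈ sphere (0 : ℂ) 1 := mem_sphere_zero_iff_norm.2 heq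
      have := hclose z hz
      rw [sub_eq_zero.1 hzy, norm_sub_rev] at this
      linarith [hψy z hz]
  have hfy_cont : Continuous fun z : Circle => f z - y :=
    (hf.sub continuousOn_const).comp_continuous continuous_subtype_val fun z => by
      simp [Circle.norm_coe]
  have hlog_f : HasContinuousLog fun z : Circle => f z - y :=
    hasContinuousLog_circle_of_continuousOn_closedBall (hf.sub continuousOn_const) hfy
  have hlog_ψ : HasContinuousLog fun z : Circle => ψ z - y :=
    hlog_f.of_norm_sub_lt hfy_cont (by fun_prop) fun z => by
      rw [sub_sub_sub_cancel_right]
      exact (hclose z z.2).trans (hψy z z.2)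
  have hδ : 0 ≤ δ := (norm_nonneg _).trans (hclose 1 (by simp)).le
  have hp : ψ.symm y ∈ ball 0 1 := by
    obtain ⟨x, hx, rfl⟩ := ψ.ball_subset_image_ball hψ0 (by simpa using hψ1)
      (mem_ball_zero_iff.2 (by linarith))
    simpa using hx
  exact not_hasContinuousLog_circle_sub (mem_ball_zero_iff.1 hp) hlog_ψ.of_homeomorph_comp_sub

theorem image_contains_ball_general
    (F : EuclideanSpace ℝ (Fin 2) → EuclideanSpace ℝ (Fin 2))
    (φ : EuclideanSpace ℝ (Fin 2) ≃ₜ EuclideanSpace ℝ (Fin 2))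
    (δ : ℝ)
    (hF : ContinuousOn F (closedBall 0 1))
    (hφ0 : φ 0 = 0)
    (hφ1 : ∀ x : EuclideanSpace ℝ (Fin 2), ‖x‖ = 1 → 1 ≤ ‖φ x‖)
    (hclose : ∀ x ∈ sphere (0 : EuclideanSpace ℝ (Fin 2)) 1, ‖F x - φ x‖ < δ) :
    ball (0 : EuclideanSpace ℝ (Fin 2)) (1 - δ) ⊆ F '' ball 0 1 := by
  let J : EuclideanSpace ℝ (Fin 2) ≃ₗᵢ[ℝ] ℂ := Complex.orthonormalBasisOneI.repr.symm
  let ψ : ℂ ≃ₜ ℂ := J.symm.toHomeomorph.trans (φ.trans J.toHomeomorph)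
  intro y hy
  obtain ⟨z, hz, hFz⟩ := Complex.ball_subset_image_ball_of_norm_sub_lt (f := J ∘ F ∘ J.symm) ψ
    (δ := δ) (J.continuous.comp_continuousOn (hF.comp J.symm.continuous.continuousOn
      fun z hz => by simpa using hz))
    (by simp [ψ, hφ0]) (fun z hz => by simpa [ψ] using hφ1 _ (by simpa using hz))
    (fun z hz => by simpa [ψ, ← map_sub] using hclose (J.symm z) (by simpa using hz))
    (by simpa using hy : J y ∈ ball 0 (1 - δ))
  exact ⟨J.symm z, by simpa using hz, by simpa using congrArg J.symm hFz⟩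

/-- if `F` is continuous on the closed unit disk and `δ`-close on the
unit circle to a homeomorphism `φ` of the plane with `φ(0)=0` and `|φ| ≥ 1` on the
unit circle, then `F(B₁(0)) ⊇ B_{1−δ}(0)`. -/
theorem image_contains_ball
    (F : EuclideanSpace ℝ (Fin 2) → EuclideanSpace ℝ (Fin 2))
    (φ : EuclideanSpace ℝ (Fin 2) ≃ₜ EuclideanSpace ℝ (Fin 2))
    (δ : ℝ) (hδ0 : 0 < δ) (hδ1 : δ < 1)
    (hF : ContinuousOn F (closedBall 0 1))
    (hφ0 : φ 0 = 0)
    (hφ1 : ∀ x : EuclideanSpace ℝ (Fin 2), ‖x‖ = 1 → 1 ≤ ‖φ x‖)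
    (hclose : ∀ x ∈ sphere (0 : EuclideanSpace ℝ (Fin 2)) 1, ‖F x - φ x‖ < δ) :
    ball (0 : EuclideanSpace ℝ (Fin 2)) (1 - δ) ⊆ F '' ball 0 1 :=
  image_contains_ball_general F φ δ hF hφ0 hφ1 hclose
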